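/- Let a′ < a < b < b′ be real numbers and suppose p > 0 on [a′,a] ∪ [b,b′] with p|_{[a′,a]} ∈ W¹₂([a′,a]) and p|_{[b,b′]} ∈ W¹₂([b,b′]). Let φ ∈ C²(ℝ) satisfy 0 ≤ φ ≤ 1, φ ≡ 1 on [a,b], and φ ≡ 0 on (−∞, a′) ∪ (b′, ∞). Then for every u ∈ Dom(L), the product φ·u belongs to Dom(L₀₀). -/

import Mathlib

open MeasureTheory Complex Filter Set

noncomputable section

/-- The complex Hilbert space `L²(ℝ)`. -/
abbrev Hsp : Type := Lp ℂ 2 (volume : Measure ℝ)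

/-- `u` is locally absolutely continuous on `ℝ` with a.e. derivative `g`
(i.e. `u` is the indefinite integral of the locally integrable function `g`). -/
def HasLocDeriv (u g : ℝ → ℂ) : Prop :=
  LocallyIntegrable g volume ∧ ∀ x : ℝ, u x = u 0 + ∫ t in (0:ℝ)..x, g t

lemma HasLocDeriv.intervalIntegrable {u g : ℝ → ℂ} (h : HasLocDeriv u g) (a b : ℝ) :
    IntervalIntegrable g volume a b :=
  (h.1.integrableOn_isCompact isCompact_uIcc).intervalIntegrable

lemma HasLocDeriv.congr_fun {u v g : ℝ → ℂ} (h : HasLocDeriv u g) (huv : ∀ x, v x = u x) :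
    HasLocDeriv v g :=
  ⟨h.1, fun x => by rw [huv x, huv 0]; exact h.2 x⟩

lemma HasLocDeriv.zero : HasLocDeriv (0 : ℝ → ℂ) 0 := by
  refine ⟨locallyIntegrable_const (0 : ℂ), fun x => by simp⟩

lemma HasLocDeriv.add {u g v h' : ℝ → ℂ} (hu : HasLocDeriv u g) (hv : HasLocDeriv v h') :
    HasLocDeriv (fun x => u x + v x) (fun x => g x + h' x) := by
  refine ⟨hu.1.add hv.1, fun x => ?_⟩
  show u x + v x = u 0 + v 0 + ∫ t in (0:ℝ)..x, (g t + h' t)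
  rw [intervalIntegral.integral_add (hu.intervalIntegrable 0 x) (hv.intervalIntegrable 0 x),
    hu.2 x, hv.2 x]
  ring

lemma HasLocDeriv.const_mul {u g : ℝ → ℂ} (c : ℂ) (hu : HasLocDeriv u g) :
    HasLocDeriv (fun x => c * u x) (fun x => c * g x) := by
  have hli : LocallyIntegrable (fun x => c * g x) volume := hu.1.smul c
  refine ⟨hli, fun x => ?_⟩
  have h : ∫ t in (0:ℝ)..x, c * g t = c * ∫ t in (0:ℝ)..x, g t := by
    simpa [smul_eq_mul] using intervalIntegral.integral_smul c g (a := (0:ℝ)) (b := x) (μ := volume)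
  show c * u x = c * u 0 + ∫ t in (0:ℝ)..x, c * g t
  rw [h, hu.2 x]
  ring

/-- The first quasi-derivative `u^{[1]} = p u' - (Q + i r) u`. -/
def qd1 (p Q r : ℝ → ℝ) (u u' : ℝ → ℂ) : ℝ → ℂ :=
  fun x => (p x : ℂ) * u' x - ((Q x : ℂ) + Complex.I * (r x : ℂ)) * u x

/-- `u` belongs (locally) to the domain of the quasi-differential expression:
`u` is locally absolutely continuous with derivative `u'` and the first quasi-derivative
`u^{[1]} = p u' - (Q + i r) u` is locally absolutely continuous with derivative `w`. -/
def QDom (p Q s r : ℝ → ℝ) (u u' w : ℝ → ℂ) : Prop :=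
  HasLocDeriv u u' ∧ HasLocDeriv (qd1 p Q r u u') w

/-- The quasi-differential expression `l[u] = -u^{[2]}` where
`u^{[2]} = (u^{[1]})' + ((Q - i r)/p) u^{[1]} + ((Q² + r²)/p - s) u`. -/
def lExpr (p Q s r : ℝ → ℝ) (u u' w : ℝ → ℂ) : ℝ → ℂ := fun x =>
  -(w x + (((Q x : ℂ) - Complex.I * (r x : ℂ)) / (p x : ℂ)) * qd1 p Q r u u' x
    + ((((Q x) ^ 2 + (r x) ^ 2 : ℝ) : ℂ) / (p x : ℂ) - (s x : ℂ)) * u x)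

/-- The standing minimal regularity assumptions on the real-valued coefficients:
`1/√|p|, Q/√|p|, r/√|p| ∈ L²_loc(ℝ)`, `s ∈ L¹_loc(ℝ)` and `1/p ≠ 0` a.e. -/
structure Coeffs (p Q s r : ℝ → ℝ) : Prop where
  meas_p : Measurable p
  meas_Q : Measurable Q
  meas_s : Measurable s
  meas_r : Measurable r
  hp : LocallyIntegrable (fun x => 1 / |p x|) volume
  hQ : LocallyIntegrable (fun x => (Q x) ^ 2 / |p x|) volume
  hr : LocallyIntegrable (fun x => (r x) ^ 2 / |p x|) volume
  hs : LocallyIntegrable s volume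
  hp0 : ∀ᵐ x ∂(volume : Measure ℝ), p x ≠ 0

lemma qd1_add_eq (p Q r : ℝ → ℝ) (u₁ u₁' u₂ u₂' : ℝ → ℂ) (x : ℝ) :
    qd1 p Q r (fun y => u₁ y + u₂ y) (fun y => u₁' y + u₂' y) x
      = qd1 p Q r u₁ u₁' x + qd1 p Q r u₂ u₂' x := by
  simp only [qd1]; ring

lemma qd1_smul_eq (p Q r : ℝ → ℝ) (c : ℂ) (u u' : ℝ → ℂ) (x : ℝ) :
    qd1 p Q r (fun y => c * u y) (fun y => c * u' y) x = c * qd1 p Q r u u' x := by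
  simp only [qd1]; ring

lemma QDom.zero (p Q s r : ℝ → ℝ) : QDom p Q s r 0 0 0 := by
  refine ⟨HasLocDeriv.zero, HasLocDeriv.zero.congr_fun fun x => ?_⟩
  simp [qd1]

lemma QDom.add {p Q s r : ℝ → ℝ} {u₁ u₁' w₁ u₂ u₂' w₂ : ℝ → ℂ}
    (h₁ : QDom p Q s r u₁ u₁' w₁) (h₂ : QDom p Q s r u₂ u₂' w₂) :
    QDom p Q s r (fun x => u₁ x + u₂ x) (fun x => u₁' x + u₂' x) (fun x => w₁ x + w₂ x) :=
  ⟨h₁.1.add h₂.1, (h₁.2.add h₂.2).congr_fun (qd1_add_eq p Q r u₁ u₁' u₂ u₂')⟩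

lemma QDom.smul {p Q s r : ℝ → ℝ} {u u' w : ℝ → ℂ} (c : ℂ) (h : QDom p Q s r u u' w) :
    QDom p Q s r (fun x => c * u x) (fun x => c * u' x) (fun x => c * w x) :=
  ⟨h.1.const_mul c, (h.2.const_mul c).congr_fun (qd1_smul_eq p Q r c u u')⟩

lemma lExpr_zero (p Q s r : ℝ → ℝ) (x : ℝ) : lExpr p Q s r 0 0 0 x = 0 := by
  simp [lExpr, qd1]

lemma lExpr_add (p Q s r : ℝ → ℝ) (u₁ u₁' w₁ u₂ u₂' w₂ : ℝ → ℂ) (x : ℝ) :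
    lExpr p Q s r (fun y => u₁ y + u₂ y) (fun y => u₁' y + u₂' y) (fun y => w₁ y + w₂ y) x
      = lExpr p Q s r u₁ u₁' w₁ x + lExpr p Q s r u₂ u₂' w₂ x := by
  simp only [lExpr, qd1]; ring

lemma lExpr_smul (p Q s r : ℝ → ℝ) (c : ℂ) (u u' w : ℝ → ℂ) (x : ℝ) :
    lExpr p Q s r (fun y => c * u y) (fun y => c * u' y) (fun y => c * w y) x
      = c * lExpr p Q s r u u' w x := by
  simp only [lExpr, qd1]; ring

/-- The graph of the maximal operator `L` in `L²(ℝ) × L²(ℝ)`. -/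
def maxGraph (p Q s r : ℝ → ℝ) : Submodule ℂ (Hsp × Hsp) where
  carrier := {fg | ∃ u u' w, QDom p Q s r u u' w ∧ (⇑fg.1 =ᵐ[volume] u) ∧
    (⇑fg.2 =ᵐ[volume] lExpr p Q s r u u' w)}
  zero_mem' := by
    refine ⟨0, 0, 0, QDom.zero p Q s r, ?_, ?_⟩
    · filter_upwards [Lp.coeFn_zero ℂ 2 (volume : Measure ℝ)] with x hx using hx
    · filter_upwards [Lp.coeFn_zero ℂ 2 (volume : Measure ℝ)] with x hx
      rw [lExpr_zero]; exact hx
  add_mem' := by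
    rintro ⟨f₁, g₁⟩ ⟨f₂, g₂⟩ ⟨u₁, u₁', w₁, hq₁, hf₁, hg₁⟩ ⟨u₂, u₂', w₂, hq₂, hf₂, hg₂⟩
    refine ⟨fun x => u₁ x + u₂ x, fun x => u₁' x + u₂' x, fun x => w₁ x + w₂ x,
      hq₁.add hq₂, ?_, ?_⟩
    · filter_upwards [Lp.coeFn_add f₁ f₂, hf₁, hf₂] with x h1 h2 h3
      show (⇑(f₁ + f₂)) x = _
      rw [h1]; simp [h2, h3]
    · filter_upwards [Lp.coeFn_add g₁ g₂, hg₁, hg₂] with x h1 h2 h3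
      show (⇑(g₁ + g₂)) x = _
      rw [h1, lExpr_add]; simp [h2, h3]
  smul_mem' := by
    rintro c ⟨f, g⟩ ⟨u, u', w, hq, hf, hg⟩
    refine ⟨fun x => c * u x, fun x => c * u' x, fun x => c * w x, hq.smul c, ?_, ?_⟩
    · filter_upwards [Lp.coeFn_smul c f, hf] with x h1 h2
      show (⇑(c • f)) x = _
      rw [h1]; simp [h2]
    · filter_upwards [Lp.coeFn_smul c g, hg] with x h1 h2
      show (⇑(c • g)) x = _
      rw [h1, lExpr_smul]; simp [h2]

/-- The graph of the preminimal operator `L₀₀` (compactly supported members of the graph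
of the maximal operator). -/
def preminGraph (p Q s r : ℝ → ℝ) : Submodule ℂ (Hsp × Hsp) where
  carrier := {fg | ∃ u u' w, QDom p Q s r u u' w ∧ HasCompactSupport u ∧
    (⇑fg.1 =ᵐ[volume] u) ∧ (⇑fg.2 =ᵐ[volume] lExpr p Q s r u u' w)}
  zero_mem' := by
    refine ⟨0, 0, 0, QDom.zero p Q s r, by simpa using HasCompactSupport.zero, ?_, ?_⟩
    · filter_upwards [Lp.coeFn_zero ℂ 2 (volume : Measure ℝ)] with x hx using hx
    · filter_upwards [Lp.coeFn_zero ℂ 2 (volume : Measure ℝ)] with x hx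
      rw [lExpr_zero]; exact hx
  add_mem' := by
    rintro ⟨f₁, g₁⟩ ⟨f₂, g₂⟩ ⟨u₁, u₁', w₁, hq₁, hc₁, hf₁, hg₁⟩ ⟨u₂, u₂', w₂, hq₂, hc₂, hf₂, hg₂⟩
    refine ⟨fun x => u₁ x + u₂ x, fun x => u₁' x + u₂' x, fun x => w₁ x + w₂ x,
      hq₁.add hq₂, hc₁.add hc₂, ?_, ?_⟩
    · filter_upwards [Lp.coeFn_add f₁ f₂, hf₁, hf₂] with x h1 h2 h3
      show (⇑(f₁ + f₂)) x = _
      rw [h1]; simp [h2, h3]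
    · filter_upwards [Lp.coeFn_add g₁ g₂, hg₁, hg₂] with x h1 h2 h3
      show (⇑(g₁ + g₂)) x = _
      rw [h1, lExpr_add]; simp [h2, h3]
  smul_mem' := by
    rintro c ⟨f, g⟩ ⟨u, u', w, hq, hc, hf, hg⟩
    refine ⟨fun x => c * u x, fun x => c * u' x, fun x => c * w x, hq.smul c,
      hc.mono ?_, ?_, ?_⟩
    · intro x hx
      simp only [Function.mem_support, ne_eq] at hx ⊢
      exact fun h => hx (by rw [h, mul_zero])
    · filter_upwards [Lp.coeFn_smul c f, hf] with x h1 h2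
      show (⇑(c • f)) x = _
      rw [h1]; simp [h2]
    · filter_upwards [Lp.coeFn_smul c g, hg] with x h1 h2
      show (⇑(c • g)) x = _
      rw [h1, lExpr_smul]; simp [h2]

/-- The maximal operator `L`, an unbounded operator in `L²(ℝ)`. -/
def maxOp (p Q s r : ℝ → ℝ) : Hsp →ₗ.[ℂ] Hsp := (maxGraph p Q s r).toLinearPMap

/-- The preminimal operator `L₀₀`, the restriction of `L` to compactly supported functions. -/
def preminOp (p Q s r : ℝ → ℝ) : Hsp →ₗ.[ℂ] Hsp := (preminGraph p Q s r).toLinearPMap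

/-- The minimal operator `L₀`, the closure of `L₀₀`. -/
def minOp (p Q s r : ℝ → ℝ) : Hsp →ₗ.[ℂ] Hsp := (preminOp p Q s r).closure

/-- The boundary bilinear form `[u,v](t) = u(t)·conj(v^{[1]}(t)) − u^{[1]}(t)·conj(v(t))`. -/
def brkt (p Q r : ℝ → ℝ) (u u' v v' : ℝ → ℂ) (t : ℝ) : ℂ :=
  u t * (starRingEnd ℂ) (qd1 p Q r v v' t) - qd1 p Q r u u' t * (starRingEnd ℂ) (v t)

/-- `u, u', w` is a concrete representative of `f` as a member of `Dom(L)`: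
`u` is a representative of the `L²`-class `f`, `u` and `u^{[1]}` are locally absolutely
continuous (with derivatives `u'` and `w` respectively) and `l[u] ∈ L²(ℝ)`. -/
def IsMaxRep (p Q s r : ℝ → ℝ) (f : Hsp) (u u' w : ℝ → ℂ) : Prop :=
  QDom p Q s r u u' w ∧ (⇑f =ᵐ[volume] u) ∧ MemLp (lExpr p Q s r u u' w) 2 volume

/-- Function-level membership in the domain of the preminimal operator `L₀₀`:
`v` and `v^{[1]}` are locally absolutely continuous, `v, l[v] ∈ L²(ℝ)` and `v` has
compact support. -/
def MemPremin (p Q s r : ℝ → ℝ) (v : ℝ → ℂ) : Prop :=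
  ∃ v' w : ℝ → ℂ, QDom p Q s r v v' w ∧ MemLp v 2 volume ∧
    MemLp (lExpr p Q s r v v' w) 2 volume ∧ HasCompactSupport v

/-- `p ∈ W¹_{2,loc}(ℝ)` (for a real-valued function), with weak derivative `p' ∈ L²_loc`. -/
def W12locR (p p' : ℝ → ℝ) : Prop :=
  LocallyIntegrable p' volume ∧ LocallyIntegrable (fun x => (p' x) ^ 2) volume ∧
  ∀ x : ℝ, p x = p 0 + ∫ t in (0:ℝ)..x, p' t

/-- `φ ∈ W²₂(ℝ)` with compact support: `φ, φ', φ'' ∈ L²(ℝ)` where `φ'` and `φ''` are the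
first and second weak derivatives of `φ`, and `supp φ` is compact. -/
def W22cs (φ φ' φ'' : ℝ → ℝ) : Prop :=
  LocallyIntegrable φ' volume ∧ LocallyIntegrable φ'' volume ∧
  MemLp φ 2 volume ∧ MemLp φ' 2 volume ∧ MemLp φ'' 2 volume ∧
  (∀ x : ℝ, φ x = φ 0 + ∫ t in (0:ℝ)..x, φ' t) ∧
  (∀ x : ℝ, φ' x = φ' 0 + ∫ t in (0:ℝ)..x, φ'' t) ∧
  HasCompactSupport φ

/-- `p ∈ W¹₂([α,β]) = H¹([α,β])` with weak derivative `p'` on the interval `[α,β]`. -/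
def W12OnIcc (p p' : ℝ → ℝ) (α β : ℝ) : Prop :=
  IntegrableOn p' (Set.Icc α β) volume ∧ MemLp p' 2 (volume.restrict (Set.Icc α β)) ∧
  ∀ x ∈ Set.Icc α β, p x = p α + ∫ t in α..x, p' t

/-! For `u ∈ Dom(L)` the product `v = φ u` has quasi-derivative `v^[1] = φ u^[1] + p φ' u`.
The coefficient `p` is only controlled on `[a',a] ∪ [b,b']`, which contains the support of `φ'`;
gluing the two `W¹₂` pieces of `p` by the chord over `[a,b]` gives an absolutely continuous `P`
with `P' ∈ L²` and `p φ' = P φ'`. So `v^[1]` is locally absolutely continuous by the product rule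
for absolutely continuous functions, and wherever `p ≠ 0`
  `l[v] = φ l[u] - 2 φ' u^[1] - (P φ')' u - 2 Q φ' u`.
Each term is in `L²`: `φ`, `φ'`, `φ''` are continuous with compact support, `P' ∈ L²`, and
`Q ∈ L²([a',a] ∪ [b,b'])` since `Q²/|p|` is locally integrable and `p = P` is bounded there. -/

open Topology

namespace HasLocDeriv

variable {u g : ℝ → ℂ}

lemma sub_eq_integral (h : HasLocDeriv u g) (x y : ℝ) : u y - u x = ∫ t in x..y, g t := by
  rw [h.2 x, h.2 y, ← intervalIntegral.integral_interval_sub_left (h.intervalIntegrable 0 y)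
    (h.intervalIntegrable 0 x)]
  ring

lemma of_eq_add_integral (hg : LocallyIntegrable g volume) (c : ℂ) (α : ℝ)
    (hu : ∀ x, u x = c + ∫ t in α..x, g t) : HasLocDeriv u g := by
  have hint : ∀ a b : ℝ, IntervalIntegrable g volume a b := fun a b =>
    (hg.integrableOn_isCompact isCompact_uIcc).intervalIntegrable
  refine ⟨hg, fun x => ?_⟩
  rw [hu x, hu 0, ← intervalIntegral.integral_add_adjacent_intervals (hint α 0) (hint 0 x)]
  ring

lemma continuous (h : HasLocDeriv u g) : Continuous u :=
  (continuous_const.add (intervalIntegral.continuous_primitive h.intervalIntegrable 0)).congr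
    fun x => (h.2 x).symm

lemma ae_hasDerivAt (h : HasLocDeriv u g) : ∀ᵐ x, HasDerivAt u (g x) x := by
  filter_upwards [LocallyIntegrable.ae_hasDerivAt_integral h.1] with x hx
  exact ((hx 0).const_add (u 0)).congr_of_eventuallyEq (Eventually.of_forall h.2)

lemma absolutelyContinuousOnInterval (h : HasLocDeriv u g) (a b : ℝ) :
    AbsolutelyContinuousOnInterval u a b := by
  have hF := (h.intervalIntegrable a b).norm.absolutelyContinuousOnInterval_intervalIntegral
    (c := a) left_mem_uIcc
  -- the increments of `u` are dominated by those of the real primitive `hF` of `‖g‖`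
  unfold AbsolutelyContinuousOnInterval at hF ⊢
  refine squeeze_zero (fun _ => Finset.sum_nonneg fun _ _ => dist_nonneg) (fun E => ?_) hF
  gcongr with i
  rw [dist_eq_norm', h.sub_eq_integral, Real.dist_eq,
    intervalIntegral.integral_interval_sub_left (h.intervalIntegrable _ _).norm
      (h.intervalIntegrable _ _).norm, intervalIntegral.integral_symm, norm_neg]
  exact intervalIntegral.norm_integral_le_abs_integral_norm

lemma ofReal {F G : ℝ → ℝ} (hG : LocallyIntegrable (fun x => (G x : ℂ)) volume) (α : ℝ)
    (hF : ∀ x, F x = F α + ∫ t in α..x, G t) :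
    HasLocDeriv (fun x => (F x : ℂ)) (fun x => (G x : ℂ)) :=
  of_eq_add_integral hG (F α) α fun x => by
    rw [intervalIntegral.integral_ofReal, hF x]
    push_cast
    ring

lemma mul {f f' g g' : ℝ → ℂ} (hf : HasLocDeriv f f') (hg : HasLocDeriv g g') :
    HasLocDeriv (fun x => f x * g x) (fun x => f' x * g x + f x * g' x) := by
  have hli : LocallyIntegrable (fun x => f' x * g x + f x * g' x) volume :=
    (hf.1.mul_continuous hg.continuous).add (hg.1.continuous_mul hf.continuous)
  have hprim : HasLocDeriv (fun x => ∫ t in (0:ℝ)..x, (f' t * g t + f t * g' t)) _ :=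
    of_eq_add_integral hli 0 0 fun x => (zero_add _).symm
  refine ⟨hli, fun x => ?_⟩
  -- `f g - ∫ (f' g + f g')` is absolutely continuous with derivative zero a.e., hence constant.
  obtain ⟨C, hC⟩ := (((hf.absolutelyContinuousOnInterval 0 x).smul
    (hg.absolutelyContinuousOnInterval 0 x)).sub (hprim.absolutelyContinuousOnInterval 0 x))
    |>.const_of_ae_hasDerivAt_zero (by
      filter_upwards [hf.ae_hasDerivAt, hg.ae_hasDerivAt, hprim.ae_hasDerivAt]
        with y hfy hgy hy _
      simpa using (hfy.mul hgy).sub hy)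
  have h0 := hC 0 left_mem_uIcc
  have hx := hC x right_mem_uIcc
  simp only [Pi.sub_apply, smul_eq_mul, Pi.mul_apply, intervalIntegral.integral_same] at h0 hx
  linear_combination hx - h0

end HasLocDeriv

lemma ContDiff.hasLocDeriv_ofReal {f : ℝ → ℝ} (hf : ContDiff ℝ 1 f) :
    HasLocDeriv (fun x => (f x : ℂ)) (fun x => ((deriv f x : ℝ) : ℂ)) :=
  HasLocDeriv.ofReal (continuous_ofReal.comp (hf.continuous_deriv le_rfl)).locallyIntegrable 0
    fun x => by
      rw [intervalIntegral.integral_deriv_eq_sub (fun t _ => hf.differentiable one_ne_zero t)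
        ((hf.continuous_deriv le_rfl).intervalIntegrable _ _)]
      ring

lemma intervalIntegral.integral_indicator_Ioc_eq_integral_projIcc {E : Type*}
    [NormedAddCommGroup E] [NormedSpace ℝ E] {g : ℝ → E} {α β : ℝ} (hαβ : α ≤ β)
    (hg : IntegrableOn g (Ioc α β)) (y x : ℝ) :
    ∫ t in y..x, (Ioc α β).indicator g t
      = ∫ t in (projIcc α β hαβ y : ℝ)..(projIcc α β hαβ x : ℝ), g t := by
  have hind : ∀ c d : ℝ, IntervalIntegrable ((Ioc α β).indicator g) volume c d := fun c d =>
    ((integrable_indicator_iff measurableSet_Ioc).2 hg).intervalIntegrable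
  have hint : ∀ c d : Icc α β, IntervalIntegrable g volume c d := fun c d =>
    intervalIntegrable_iff.2 <| hg.mono_set <|
      Ioc_subset_Ioc (le_min c.2.1 d.2.1) (max_le c.2.2 d.2.2)
  suffices key : ∀ x, ∫ t in α..x, (Ioc α β).indicator g t
      = ∫ t in α..(projIcc α β hαβ x : ℝ), g t by
    rw [← intervalIntegral.integral_interval_sub_left (hind α x) (hind α y), key, key,
      intervalIntegral.integral_interval_sub_left (hint ⟨α, left_mem_Icc.2 hαβ⟩ _)
      (hint ⟨α, left_mem_Icc.2 hαβ⟩ _)]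
  intro x
  rcases le_total x α with hx | hx
  · rw [projIcc_of_le_left hαβ hx, intervalIntegral.integral_symm,
      intervalIntegral.integral_of_le hx, setIntegral_indicator measurableSet_Ioc, Ioc_inter_Ioc]
    simp [hx]
  · rw [coe_projIcc, intervalIntegral.integral_of_le hx, setIntegral_indicator measurableSet_Ioc,
      Ioc_inter_Ioc, intervalIntegral.integral_of_le (by simp [hx, hαβ]),
      max_eq_right (le_min hαβ hx)]
    simp [min_comm]

namespace W12OnIcc

variable {f f' : ℝ → ℝ} {α β : ℝ}

lemma intervalIntegrable (hf : W12OnIcc f f' α β) {c d : ℝ} (hc : c ∈ Icc α β)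
    (hd : d ∈ Icc α β) : IntervalIntegrable f' volume c d :=
  (hf.1.mono_set (uIcc_subset_Icc hc hd)).intervalIntegrable

lemma integrable_indicator_Ioc (hf : W12OnIcc f f' α β) :
    Integrable ((Ioc α β).indicator f') volume :=
  (integrable_indicator_iff measurableSet_Ioc).2 (hf.1.mono_set Ioc_subset_Icc_self)

lemma memLp_indicator_Ioc (hf : W12OnIcc f f' α β) : MemLp ((Ioc α β).indicator f') 2 volume :=
  (memLp_indicator_iff_restrict measurableSet_Ioc).2
    (hf.2.1.mono_measure (Measure.restrict_mono Ioc_subset_Icc_self le_rfl))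

lemma integral_indicator_Ioc (hf : W12OnIcc f f' α β) (hαβ : α ≤ β) (y x : ℝ) :
    ∫ t in y..x, (Ioc α β).indicator f' t
      = f (projIcc α β hαβ x) - f (projIcc α β hαβ y) := by
  have hα : α ∈ Icc α β := left_mem_Icc.2 hαβ
  rw [intervalIntegral.integral_indicator_Ioc_eq_integral_projIcc hαβ
      (hf.1.mono_set Ioc_subset_Icc_self), hf.2.2 _ (projIcc α β hαβ x).2,
    hf.2.2 _ (projIcc α β hαβ y).2, add_sub_add_left_eq_sub,
    intervalIntegral.integral_interval_sub_left
      (hf.intervalIntegrable hα (projIcc α β hαβ x).2)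
      (hf.intervalIntegrable hα (projIcc α β hαβ y).2)]

lemma affine (c κ α β : ℝ) : W12OnIcc (fun x => c + κ * (x - α)) (fun _ => κ) α β :=
  ⟨integrableOn_const measure_Icc_lt_top.ne, memLp_const κ, fun x _ => by simp; ring⟩

end W12OnIcc

theorem exists_hasLocDeriv_eqOn_Icc_union_Icc {p p₁' p₂' : ℝ → ℝ} {a' a b b' : ℝ}
    (h₁ : a' ≤ a) (h₂ : a < b) (h₃ : b ≤ b') (hW₁ : W12OnIcc p p₁' a' a)
    (hW₂ : W12OnIcc p p₂' b b') :
    ∃ P q : ℝ → ℝ, HasLocDeriv (fun x => (P x : ℂ)) (fun x => (q x : ℂ)) ∧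
      MemLp q 2 volume ∧ EqOn P p (Icc a' a ∪ Icc b b') := by
  obtain ⟨κ, hκ⟩ : ∃ κ, p b = p a + κ * (b - a) :=
    ⟨(p b - p a) / (b - a), by field_simp [(sub_pos.2 h₂).ne']; ring⟩
  -- `P` follows `p` on `[a',a]`, the chord from `(a, p a)` to `(b, p b)`, then `p` on `[b,b']`.
  have hℓ := W12OnIcc.affine (p a) κ a b
  set q : ℝ → ℝ := fun x => (Ioc a' a).indicator p₁' x + (Ioc a b).indicator (fun _ => κ) x
    + (Ioc b b').indicator p₂' x
  have hq : MemLp q 2 volume :=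
    (hW₁.memLp_indicator_Ioc.add hℓ.memLp_indicator_Ioc).add hW₂.memLp_indicator_Ioc
  refine ⟨fun x => p a' + ∫ t in a'..x, q t, q,
    HasLocDeriv.ofReal (hq.ofReal.locallyIntegrable one_le_two) a' fun x => by simp, hq,
    fun x hx => ?_⟩
  have hi₁ := hW₁.integrable_indicator_Ioc.intervalIntegrable (a := a') (b := x)
  have hiℓ := hℓ.integrable_indicator_Ioc.intervalIntegrable (a := a') (b := x)
  have hi₂ := hW₂.integrable_indicator_Ioc.intervalIntegrable (a := a') (b := x)
  show p a' + ∫ t in a'..x, q t = p x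
  rw [intervalIntegral.integral_add (hi₁.add hiℓ) hi₂,
    intervalIntegral.integral_add hi₁ hiℓ, hW₁.integral_indicator_Ioc h₁,
    hℓ.integral_indicator_Ioc h₂.le, hW₂.integral_indicator_Ioc h₃]
  rcases hx with hx | hx
  · rw [projIcc_of_mem h₁ hx, projIcc_left, projIcc_of_le_left _ hx.2,
      projIcc_of_le_left _ h₁, projIcc_of_le_left _ (hx.2.trans h₂.le),
      projIcc_of_le_left _ (h₁.trans h₂.le)]
    ring
  · rw [projIcc_of_mem h₃ hx, projIcc_of_right_le _ (h₂.le.trans hx.1), projIcc_left,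
      projIcc_of_right_le _ hx.1, projIcc_of_le_left _ h₁,
      projIcc_of_le_left _ (h₁.trans h₂.le)]
    simp only
    linear_combination -hκ

section QuasiDerivative

variable {p Q s r : ℝ → ℝ} {u u' w φ φ' m m' : ℝ → ℂ}

lemma QDom.mul (hφ : HasLocDeriv φ φ') (hm : HasLocDeriv m m') (hmp : ∀ x, m x = p x * φ' x)
    (hu : QDom p Q s r u u' w) :
    QDom p Q s r (fun x => φ x * u x) (fun x => φ' x * u x + φ x * u' x)
      (fun x => φ' x * qd1 p Q r u u' x + φ x * w x + (m' x * u x + m x * u' x)) :=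
  ⟨hφ.mul hu.1, ((hφ.mul hu.2).add (hm.mul hu.1)).congr_fun fun x => by
    simp only [qd1, hmp]; ring⟩

lemma lExpr_mul {x : ℝ} (hp : p x ≠ 0) (hmp : m x = p x * φ' x) :
    lExpr p Q s r (fun x => φ x * u x) (fun x => φ' x * u x + φ x * u' x)
      (fun x => φ' x * qd1 p Q r u u' x + φ x * w x + (m' x * u x + m x * u' x)) x
      = φ x * lExpr p Q s r u u' w x
        - (2 * φ' x * qd1 p Q r u u' x + m' x * u x + 2 * Q x * φ' x * u x) := by
  have hp' : (p x : ℂ) ≠ 0 := ofReal_ne_zero.2 hp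
  simp only [lExpr, qd1, hmp]
  field_simp
  ring

end QuasiDerivative

lemma deriv_eq_zero_of_notMem_Icc_union_Icc {φ : ℝ → ℝ} {a' a b b' x : ℝ}
    (hφ1 : ∀ x ∈ Icc a b, φ x = 1) (hsupp : Function.support φ ⊆ Icc a' b')
    (hx : x ∉ Icc a' a ∪ Icc b b') : deriv φ x = 0 := by
  by_cases hab : x ∈ Ioo a b
  · have : φ =ᶠ[𝓝 x] fun _ => 1 :=
      eventually_of_mem (isOpen_Ioo.mem_nhds hab) fun y hy => hφ1 y (Ioo_subset_Icc_self hy)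
    rw [this.deriv_eq, deriv_const]
  · refine Function.notMem_support.1 fun h => ?_
    have := closure_minimal hsupp isClosed_Icc (support_deriv_subset h)
    simp only [mem_union, mem_Icc, mem_Ioo] at hx hab this
    grind

lemma memLp_indicator_of_integrableOn_sq_div_abs {μ : Measure ℝ} {p Q : ℝ → ℝ}
    {K : Set ℝ} {C : ℝ} (hK : MeasurableSet K) (hQ : AEStronglyMeasurable Q μ)
    (hQp : IntegrableOn (fun x => Q x ^ 2 / |p x|) K μ) (hp0 : ∀ᵐ x ∂μ, p x ≠ 0)
    (hpC : ∀ x ∈ K, |p x| ≤ C) : MemLp (K.indicator Q) 2 μ := by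
  rw [memLp_indicator_iff_restrict hK, memLp_two_iff_integrable_sq hQ.restrict]
  refine (hQp.const_mul C).mono' (hQ.restrict.pow 2) ?_
  filter_upwards [ae_restrict_mem hK, ae_restrict_of_ae hp0] with x hxK hx
  rw [Real.norm_eq_abs, abs_of_nonneg (sq_nonneg _)]
  calc Q x ^ 2 = Q x ^ 2 / |p x| * |p x| := (div_mul_cancel₀ _ (abs_ne_zero.2 hx)).symm
    _ ≤ C * (Q x ^ 2 / |p x|) := by
      rw [mul_comm]; exact mul_le_mul_of_nonneg_right (hpC x hxK) (by positivity)

lemma Coeffs.memLp_ofReal_mul {p Q s r : ℝ → ℝ} (hc : Coeffs p Q s r) {K : Set ℝ}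
    (hK : IsCompact K) {C : ℝ} (hpC : ∀ x ∈ K, |p x| ≤ C) {g : ℝ → ℂ}
    (hg : MemLp g ⊤ volume) (hgK : ∀ x ∉ K, g x = 0) :
    MemLp (fun x => (Q x : ℂ) * g x) 2 volume := by
  have hQK := memLp_indicator_of_integrableOn_sq_div_abs hK.measurableSet
    hc.meas_Q.aestronglyMeasurable (hc.hQ.integrableOn_isCompact hK) hc.hp0 hpC
  refine (hQK.ofReal.mul' hg).ae_eq (Eventually.of_forall fun x => ?_)
  by_cases hx : x ∈ K
  · simp [indicator_of_mem hx, mul_comm]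
  · simp [hgK x hx]

theorem Coeffs.memPremin_ofReal_mul {p Q s r : ℝ → ℝ} (hc : Coeffs p Q s r) {φ : ℝ → ℝ}
    (hφ : ContDiff ℝ 2 φ) (hφc : HasCompactSupport φ) {K : Set ℝ} (hK : IsCompact K)
    (hφK : ∀ x ∉ K, deriv φ x = 0) {P q : ℝ → ℝ}
    (hP : HasLocDeriv (fun x => (P x : ℂ)) (fun x => (q x : ℂ))) (hq : MemLp q 2 volume)
    (hPp : EqOn P p K) {u u' w : ℝ → ℂ} (hu : QDom p Q s r u u' w)
    (hl2 : MemLp (lExpr p Q s r u u' w) 2 volume) :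
    MemPremin p Q s r (fun x => (φ x : ℂ) * u x) := by
  have hφ' : ContDiff ℝ 1 (deriv φ) := hφ.deriv'
  have hmp : ∀ x, (P x : ℂ) * deriv φ x = p x * deriv φ x := fun x => by
    by_cases hx : x ∈ K
    · rw [hPp hx]
    · simp [hφK x hx]
  refine ⟨_, _, QDom.mul (hφ.of_le one_le_two).hasLocDeriv_ofReal
    (hP.mul hφ'.hasLocDeriv_ofReal) hmp hu, ?_, ?_, (hφc.comp_left ofReal_zero).mul_right⟩
  · exact ((continuous_ofReal.comp hφ.continuous).mul hu.1.continuous)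
      |>.memLp_of_hasCompactSupport (hφc.comp_left ofReal_zero).mul_right
  obtain ⟨C, hC⟩ := hK.exists_bound_of_continuousOn hP.continuous.continuousOn
  have hφ'u : MemLp (fun x => ((deriv φ x : ℝ) : ℂ) * u x) ⊤ volume :=
    ((continuous_ofReal.comp hφ'.continuous).mul hu.1.continuous)
      |>.memLp_top_of_hasCompactSupport (hφc.deriv.comp_left ofReal_zero).mul_right volume
  have hQφ'u := hc.memLp_ofReal_mul hK (C := C) (fun x hx => by simpa [← hPp hx] using hC x hx)
    hφ'u fun x hx => by simp [hφK x hx]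
  have hφl : MemLp (fun x => (φ x : ℂ) * lExpr p Q s r u u' w x) 2 volume :=
    hl2.mul' ((continuous_ofReal.comp hφ.continuous).memLp_top_of_hasCompactSupport
      (hφc.comp_left ofReal_zero) volume)
  have hφ'qd1 : MemLp (fun x => 2 * ((deriv φ x : ℝ) : ℂ) * qd1 p Q r u u' x) 2 volume :=
    ((continuous_const.mul (continuous_ofReal.comp hφ'.continuous)).mul hu.2.continuous)
      |>.memLp_of_hasCompactSupport (hφc.deriv.comp_left ofReal_zero).mul_left.mul_right
  have hPφ''u : MemLp (fun x => (P x : ℂ) * deriv (deriv φ) x * u x) 2 volume :=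
    ((hP.continuous.mul (continuous_ofReal.comp (hφ'.continuous_deriv le_rfl))).mul
      hu.1.continuous).memLp_of_hasCompactSupport
      (hφc.deriv.deriv.comp_left ofReal_zero).mul_left.mul_right
  have hq' : MemLp (fun x => (q x : ℂ)) 2 volume := hq.ofReal
  refine (hφl.sub ((hφ'qd1.add ((hq'.mul' hφ'u).add hPφ''u)).add
    (hQφ'u.const_mul 2))).ae_eq ?_
  filter_upwards [hc.hp0] with x hx
  rw [lExpr_mul hx (hmp x)]
  simp only [Pi.add_apply, Pi.sub_apply]
  ring

theorem cutoff_interval_mul_mem_premin_general (p Q s r : ℝ → ℝ) (hc : Coeffs p Q s r)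
    (a' a b b' : ℝ) (h₁ : a' < a) (h₂ : a < b) (h₃ : b < b')
    (hpW₁ : ∃ p₁' : ℝ → ℝ, W12OnIcc p p₁' a' a)
    (hpW₂ : ∃ p₂' : ℝ → ℝ, W12OnIcc p p₂' b b')
    (φ : ℝ → ℝ) (hφC2 : ContDiff ℝ 2 φ)
    (hφ1 : ∀ x ∈ Set.Icc a b, φ x = 1)
    (hφ0 : ∀ x : ℝ, (x < a' ∨ b' < x) → φ x = 0)
    (u u' w : ℝ → ℂ) (hq : QDom p Q s r u u' w)
    (hl2 : MemLp (lExpr p Q s r u u' w) 2 volume) :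
    MemPremin p Q s r (fun x => (φ x : ℂ) * u x) := by
  obtain ⟨p₁', hW₁⟩ := hpW₁
  obtain ⟨p₂', hW₂⟩ := hpW₂
  obtain ⟨P, q, hP, hqL2, hPp⟩ :=
    exists_hasLocDeriv_eqOn_Icc_union_Icc h₁.le h₂ h₃.le hW₁ hW₂
  have hsupp : Function.support φ ⊆ Icc a' b' := fun x hx => by
    by_contra h
    rw [mem_Icc, not_and_or, not_le, not_le] at h
    exact hx (hφ0 x h)
  exact hc.memPremin_ofReal_mul hφC2 (.of_support_subset_isCompact isCompact_Icc hsupp)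
    (isCompact_Icc.union isCompact_Icc)
    (fun x hx => deriv_eq_zero_of_notMem_Icc_union_Icc hφ1 hsupp hx) hP hqL2 hPp hq hl2

/-- Let `a' < a < b < b'`, with `p > 0` on `[a',a] ∪ [b,b']`,
`p|_{[a',a]} ∈ W¹₂([a',a])` and `p|_{[b,b']} ∈ W¹₂([b,b'])`. Let `φ ∈ C²(ℝ)` satisfy
`0 ≤ φ ≤ 1`, `φ ≡ 1` on `[a,b]` and `φ ≡ 0` on `(−∞,a') ∪ (b',∞)`. Then for every
`u ∈ Dom(L)` the product `φ·u` belongs to `Dom(L₀₀)`. -/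
theorem cutoff_interval_mul_mem_premin (p Q s r : ℝ → ℝ) (hc : Coeffs p Q s r)
    (a' a b b' : ℝ) (h₁ : a' < a) (h₂ : a < b) (h₃ : b < b')
    (hppos : ∀ x ∈ Set.Icc a' a ∪ Set.Icc b b', 0 < p x)
    (hpW₁ : ∃ p₁' : ℝ → ℝ, W12OnIcc p p₁' a' a)
    (hpW₂ : ∃ p₂' : ℝ → ℝ, W12OnIcc p p₂' b b')
    (φ : ℝ → ℝ) (hφC2 : ContDiff ℝ 2 φ)
    (hφ01 : ∀ x : ℝ, 0 ≤ φ x ∧ φ x ≤ 1)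
    (hφ1 : ∀ x ∈ Set.Icc a b, φ x = 1)
    (hφ0 : ∀ x : ℝ, (x < a' ∨ b' < x) → φ x = 0)
    (u u' w : ℝ → ℂ) (hq : QDom p Q s r u u' w) (hu2 : MemLp u 2 volume)
    (hl2 : MemLp (lExpr p Q s r u u' w) 2 volume) :
    MemPremin p Q s r (fun x => (φ x : ℂ) * u x) :=
  cutoff_interval_mul_mem_premin_general p Q s r hc a' a b b' h₁ h₂ h₃ hpW₁ hpW₂ φ hφC2 hφ1 hφ0 u u'
    w hq hl2

end
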